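/- Let (P^n_t)_{t≥0}, n ∈ ℕ, be strongly continuous semigroups on a Banach space Z with generators A^n, and suppose there are uniform constants M ≥ 1 and ω ∈ ℝ with ‖P^n_t‖_{L(Z)} ≤ M exp(ωt) for all t ≥ 0 and all n. Let D ⊆ ∩_n dom(A^n) be a subset such that: (i) the linear span of D is dense in Z; (ii) there is a norm ‖·‖_D on span(D) such that P^m_u f ∈ ∩_n dom(A^n) for all m, u and, for each f ∈ D and each t > 0, there is a sequence a^f_{nm} with a^f_{nm} → 0 as n, m → ∞ and ‖A^n P^m_u f − A^m P^m_u f‖ ≤ a^f_{nm} ‖f‖_D for all n, m and all 0 ≤ u ≤ t. Then there exists a strongly continuous semigroup (P^∞_t)_{t≥0} on Z with ‖P^∞_t‖_{L(Z)} ≤ M exp(ωt) such that lim_{n→∞} P^n_t f = P^∞_t f for all f ∈ Z, uniformly on compact intervals in t. If in addition Z = 𝓑^ρ(X) for a weighted space (X, ρ) and every (P^n_t) is a generalized Feller semigroup, then (P^∞_t) is a generalized Feller semigroup. -/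

import Mathlib

/-!
For `f ∈ D` the curve `u ↦ P^n_{t-u} P^m_u f` runs from `P^n_t f` to `P^m_t f` with right derivative
`P^n_{t-u} (A^m - A^n) P^m_u f`, so the mean value inequality gives
`‖P^n_t f - P^m_t f‖ ≤ M e^{|ω| T} T a^f_{nm} ‖f‖_D` for `t ∈ [0, T]`: the orbits are uniformly
Cauchy on compact time intervals. The vectors with this property form a subspace, closed because
the `P^n_t`, `t ≤ T`, are uniformly bounded; it contains `D`, hence everything. The pointwise limit
is a bounded operator by Banach–Steinhaus and inherits the semigroup law and the growth bound, its
orbits are continuous as uniform limits of continuous orbits, and positivity passes to the limit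
because point evaluations are continuous on `𝓑^ρ(X)`.
-/

open MeasureTheory Filter Set Topology

namespace GenFeller

variable {X : Type*} [TopologicalSpace X]

/-- `ρ` is an admissible weight function on `X`: positive with compact sublevel sets. -/
def Admissible (ρ : X → ℝ) : Prop :=
  (∀ x, 0 < ρ x) ∧ ∀ R : ℝ, 0 < R → IsCompact {x : X | ρ x ≤ R}

/-- The weighted sup-norm `‖f‖_ρ = sup_x ρ(x)⁻¹ |f x|`. -/
noncomputable def rnorm (ρ : X → ℝ) (f : X → ℝ) : ℝ :=
  sSup (Set.range fun x => (ρ x)⁻¹ * |f x|)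

/-- `f ∈ B^ρ(X)`. -/
def MemB (ρ : X → ℝ) (f : X → ℝ) : Prop :=
  ∃ C : ℝ, ∀ x, |f x| ≤ C * ρ x

/-- `f ∈ 𝓑^ρ(X)`: `f ∈ B^ρ(X)` and `f` lies in the `‖·‖_ρ`-closure of the bounded
continuous functions. -/
def MemCb (ρ : X → ℝ) (f : X → ℝ) : Prop :=
  MemB ρ f ∧ ∀ ε : ℝ, 0 < ε → ∃ g : X → ℝ, Continuous g ∧ (∃ C : ℝ, ∀ x, |g x| ≤ C) ∧
    ∀ x, |f x - g x| ≤ ε * ρ x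

/-- `T` is linear on `𝓑^ρ(X)`. -/
def LinOn (ρ : X → ℝ) (T : (X → ℝ) → (X → ℝ)) : Prop :=
  (∀ f g, MemCb ρ f → MemCb ρ g → T (f + g) = T f + T g) ∧
  (∀ (c : ℝ) (f), MemCb ρ f → T (c • f) = c • T f)

/-- `‖T f‖_ρ ≤ C ‖f‖_ρ` for all `f ∈ 𝓑^ρ(X)`, stated pointwise. -/
def OpBound (ρ : X → ℝ) (T : (X → ℝ) → (X → ℝ)) (C : ℝ) : Prop :=
  ∀ f, MemCb ρ f → ∀ x, |T f x| ≤ C * rnorm ρ f * ρ x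

/-- A generalized Feller semigroup on `𝓑^ρ(X)` (properties F1–F5). -/
structure IsGenFeller (ρ : X → ℝ) (P : ℝ → (X → ℝ) → (X → ℝ)) : Prop where
  maps : ∀ t, 0 ≤ t → ∀ f, MemCb ρ f → MemCb ρ (P t f)
  lin : ∀ t, 0 ≤ t → LinOn ρ (P t)
  id0 : ∀ f, MemCb ρ f → P 0 f = f
  law : ∀ s t, 0 ≤ s → 0 ≤ t → ∀ f, MemCb ρ f → P (t + s) f = P t (P s f)
  ptconv : ∀ f, MemCb ρ f → ∀ x,
    Tendsto (fun t => P t f x) (nhdsWithin 0 (Set.Ioi 0)) (nhds (f x))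
  locbdd : ∃ C : ℝ, ∃ ε : ℝ, 0 < ε ∧ ∀ t ∈ Set.Icc (0:ℝ) ε, OpBound ρ (P t) C
  pos : ∀ t, 0 ≤ t → ∀ f, MemCb ρ f → (∀ x, 0 ≤ f x) → ∀ x, 0 ≤ P t f x

/-- `‖P_t‖ ≤ M exp(ω t)` for all `t ≥ 0`. -/
def GrowthBound (ρ : X → ℝ) (P : ℝ → (X → ℝ) → (X → ℝ)) (M ω : ℝ) : Prop :=
  ∀ t, 0 ≤ t → OpBound ρ (P t) (M * Real.exp (ω * t))

/-- `g` is the value of the generator of `P` at `f` (limit in `‖·‖_ρ`). -/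
def IsGenerator (ρ : X → ℝ) (P : ℝ → (X → ℝ) → (X → ℝ)) (f g : X → ℝ) : Prop :=
  MemCb ρ f ∧ MemCb ρ g ∧
  Tendsto (fun t : ℝ => rnorm ρ (fun x => t⁻¹ * (P t f x - f x) - g x))
    (nhdsWithin 0 (Set.Ioi 0)) (nhds 0)

/-- `D` is a set of elements of `𝓑^ρ(X)` which is `‖·‖_ρ`-dense in it. -/
def DenseIn (ρ : X → ℝ) (D : Set (X → ℝ)) : Prop :=
  (∀ f ∈ D, MemCb ρ f) ∧
  ∀ f, MemCb ρ f → ∀ ε : ℝ, 0 < ε → ∃ h ∈ D, rnorm ρ (fun x => f x - h x) ≤ ε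

/-- Operator norm of a linear functional on `𝓑^ρ(X)`. -/
noncomputable def opNormF (ρ : X → ℝ) (ℓ : (X → ℝ) → ℝ) : ℝ :=
  sSup {r : ℝ | ∃ f, MemCb ρ f ∧ rnorm ρ f ≤ 1 ∧ r = |ℓ f|}

/-- Operator norm of an operator on `𝓑^ρ(X)`. -/
noncomputable def opNormOp (ρ : X → ℝ) (B : (X → ℝ) → (X → ℝ)) : ℝ :=
  sSup {r : ℝ | ∃ f, MemCb ρ f ∧ rnorm ρ f ≤ 1 ∧ r = rnorm ρ (B f)}

end GenFeller

open Filter Set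

universe u v

section OperatorFamilies

variable {𝕜 E F α : Type*} [NontriviallyNormedField 𝕜] [NormedAddCommGroup E] [NormedSpace 𝕜 E]
  [NormedAddCommGroup F] [NormedSpace 𝕜 F]

theorem tendsto_clm_apply_zero {T : α → E →L[𝕜] F} {x : α → E} {l : Filter α} {C : ℝ}
    (hT : ∀ᶠ a in l, ‖T a‖ ≤ C) (hx : Tendsto x l (𝓝 0)) :
    Tendsto (fun a => T a (x a)) l (𝓝 0) :=
  hx.op_zero_isBoundedUnder_le (g := T) (isBoundedUnder_of_eventually_le hT) (fun v S => S v)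
    fun v S => (S.le_opNorm v).trans_eq (mul_comm _ _)

theorem tendsto_clm_apply {T : α → E →L[𝕜] F} {x : α → E} {l : Filter α} {C : ℝ} {x₀ : E}
    {y : F} (hT : ∀ᶠ a in l, ‖T a‖ ≤ C) (hx : Tendsto x l (𝓝 x₀))
    (hTx₀ : Tendsto (fun a => T a x₀) l (𝓝 y)) :
    Tendsto (fun a => T a (x a)) l (𝓝 y) := by
  have h := (tendsto_clm_apply_zero hT (tendsto_sub_nhds_zero_iff.2 hx)).add hTx₀
  simpa only [map_sub, sub_add_cancel, zero_add] using h

theorem exists_clm_tendsto_of_cauchySeq [CompleteSpace E] [CompleteSpace F] {T : ℕ → E →L[𝕜] F}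
    (h : ∀ x, CauchySeq fun n => T n x) :
    ∃ L : E →L[𝕜] F, ∀ x, Tendsto (fun n => T n x) atTop (𝓝 (L x)) := by
  choose L hL using fun x => cauchySeq_tendsto_of_complete (h x)
  exact ⟨continuousLinearMapOfTendsto T (tendsto_pi_nhds.2 hL), hL⟩

theorem opNorm_le_of_tendsto {T : α → E →L[𝕜] F} {L : E →L[𝕜] F} {l : Filter α} [l.NeBot]
    {C : ℝ} (hC : 0 ≤ C) (hT : ∀ a, ‖T a‖ ≤ C) (h : ∀ x, Tendsto (fun a => T a x) l (𝓝 (L x))) :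
    ‖L‖ ≤ C :=
  L.opNorm_le_bound hC fun x =>
    le_of_tendsto (h x).norm (Eventually.of_forall fun a => (T a).le_of_opNorm_le (hT a) x)

theorem uniformCauchySeqOn_of_dist_le {β : Type*} [PseudoMetricSpace β] {G : ℕ → α → β}
    {s : Set α} {b : ℕ × ℕ → ℝ} (hb : Tendsto b atTop (𝓝 0))
    (h : ∀ n m, ∀ a ∈ s, dist (G n a) (G m a) ≤ b (n, m)) : UniformCauchySeqOn G atTop s := by
  refine Metric.uniformCauchySeqOn_iff.2 fun ε hε => ?_
  obtain ⟨⟨N, N'⟩, hN⟩ := eventually_atTop.1 (hb.eventually (gt_mem_nhds hε))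
  exact ⟨max N N', fun m hm n hn a ha =>
    (h m n a ha).trans_lt (hN (m, n) ⟨le_of_max_le_left hm, le_of_max_le_right hn⟩)⟩

def uniformCauchySubmodule (T : ℕ → α → E →L[𝕜] F) (s : Set α) : Submodule 𝕜 E where
  carrier := {x | UniformCauchySeqOn (fun n a => T n a x) atTop s}
  add_mem' {x y} hx hy := by
    simp only [mem_ofPred_eq, map_add] at hx hy ⊢
    exact hx.fun_add hy
  zero_mem' := by
    simpa only [mem_ofPred_eq, map_zero] using
      ((tendsto_const_nhds (x := (0 : F))).tendstoUniformlyOn_const s).uniformCauchySeqOn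
  smul_mem' c x hx := by
    simp only [mem_ofPred_eq, map_smul] at hx ⊢
    exact (uniformContinuous_const_smul c).comp_uniformCauchySeqOn hx

theorem mem_uniformCauchySubmodule {T : ℕ → α → E →L[𝕜] F} {s : Set α} {x : E} :
    x ∈ uniformCauchySubmodule T s ↔ UniformCauchySeqOn (fun n a => T n a x) atTop s :=
  Iff.rfl

theorem isClosed_uniformCauchySubmodule {T : ℕ → α → E →L[𝕜] F} {s : Set α} {C : ℝ}
    (hT : ∀ n, ∀ a ∈ s, ‖T n a‖ ≤ C) : IsClosed (uniformCauchySubmodule T s : Set E) := by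
  refine isClosed_of_closure_subset fun x hx =>
    mem_uniformCauchySubmodule.2 <| Metric.uniformCauchySeqOn_iff.2 fun ε hε => ?_
  obtain ⟨δ, hδ, hCδ⟩ := exists_pos_mul_lt (show 0 < ε / 3 by positivity) C
  obtain ⟨y, hy, hxy⟩ := Metric.mem_closure_iff.1 hx δ hδ
  obtain ⟨N, hN⟩ :=
    Metric.uniformCauchySeqOn_iff.1 (mem_uniformCauchySubmodule.1 hy) (ε / 3) (by positivity)
  refine ⟨N, fun m hm n hn a ha => ?_⟩
  have hclose : ∀ k, dist (T k a x) (T k a y) < ε / 3 := fun k =>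
    calc dist (T k a x) (T k a y) ≤ C * dist x y :=
          ((T k a).dist_le_opNorm x y).trans
            (mul_le_mul_of_nonneg_right (hT k a ha) dist_nonneg)
      _ ≤ C * δ := mul_le_mul_of_nonneg_left hxy.le ((norm_nonneg _).trans (hT k a ha))
      _ < ε / 3 := hCδ
  calc dist (T m a x) (T n a x)
      ≤ dist (T m a x) (T m a y) + dist (T m a y) (T n a y) + dist (T n a y) (T n a x) :=
        dist_triangle4 _ _ _ _
    _ < ε / 3 + ε / 3 + ε / 3 := by
        gcongr
        · exact hclose m
        · exact hN m hm n hn a ha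
        · rw [dist_comm]; exact hclose n
    _ = ε := by ring

theorem uniformCauchySeqOn_of_dense_span {T : ℕ → α → E →L[𝕜] F} {s : Set α} {C : ℝ}
    (hT : ∀ n, ∀ a ∈ s, ‖T n a‖ ≤ C) {D : Set E} (hD : Dense (Submodule.span 𝕜 D : Set E))
    (hDT : ∀ g ∈ D, UniformCauchySeqOn (fun n a => T n a g) atTop s) (x : E) :
    UniformCauchySeqOn (fun n a => T n a x) atTop s :=
  (isClosed_uniformCauchySubmodule hT).closure_subset_iff.2 (Submodule.span_le.2 hDT)
    (hD.closure_eq ▸ mem_univ x)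

theorem exists_tendstoUniformlyOn_Icc [CompleteSpace E] [CompleteSpace F]
    {T : ℕ → ℝ → E →L[𝕜] F}
    (h : ∀ τ x, UniformCauchySeqOn (fun n t => T n t x) atTop (Icc 0 τ)) :
    ∃ L : ℝ → E →L[𝕜] F,
      ∀ τ x, TendstoUniformlyOn (fun n t => T n t x) (fun t => L t x) atTop (Icc 0 τ) := by
  have hpt : ∀ t, ∃ L : E →L[𝕜] F, 0 ≤ t → ∀ x, Tendsto (fun n => T n t x) atTop (𝓝 (L x)) := by
    intro t
    by_cases ht : 0 ≤ t
    · obtain ⟨L, hL⟩ := exists_clm_tendsto_of_cauchySeq fun x => (h t x).cauchySeq ⟨ht, le_rfl⟩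
      exact ⟨L, fun _ => hL⟩
    · exact ⟨0, fun h => absurd h ht⟩
  choose L hL using hpt
  exact ⟨L, fun τ x => (h τ x).tendstoUniformlyOn_of_tendsto fun t ht => hL t ht.1 x⟩

end OperatorFamilies

section Semigroup

variable {Z : Type*} [NormedAddCommGroup Z] [NormedSpace ℝ Z]

structure IsC0Semigroup (S : ℝ → Z →L[ℝ] Z) : Prop where
  map_zero : S 0 = ContinuousLinearMap.id ℝ Z
  map_add : ∀ s t, 0 ≤ s → 0 ≤ t → S (t + s) = (S t).comp (S s)
  tendsto_nhdsGT : ∀ f, Tendsto (fun t => S t f) (𝓝[>] 0) (𝓝 f)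

def HasGeneratorAt (S : ℝ → Z →L[ℝ] Z) (g f : Z) : Prop :=
  Tendsto (fun t : ℝ => t⁻¹ • (S t f - f)) (𝓝[>] 0) (𝓝 g)

theorem norm_le_of_growthBound {S : ℝ → Z →L[ℝ] Z} {M ω : ℝ}
    (hb : ∀ t, 0 ≤ t → ‖S t‖ ≤ M * Real.exp (ω * t)) {T : ℝ} :
    ∀ s ∈ Icc 0 T, ‖S s‖ ≤ M * Real.exp (|ω| * T) := by
  intro s hs
  have hM : 0 ≤ M :=
    nonneg_of_mul_nonneg_left ((norm_nonneg _).trans (hb s hs.1)) (Real.exp_pos _)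
  refine (hb s hs.1).trans (mul_le_mul_of_nonneg_left (Real.exp_le_exp.2 ?_) hM)
  calc ω * s ≤ |ω| * s := mul_le_mul_of_nonneg_right (le_abs_self ω) hs.1
    _ ≤ |ω| * T := mul_le_mul_of_nonneg_left hs.2 (abs_nonneg ω)

namespace IsC0Semigroup

variable {S R : ℝ → Z →L[ℝ] Z}

theorem apply_add (hS : IsC0Semigroup S) {s t : ℝ} (hs : 0 ≤ s) (ht : 0 ≤ t) (f : Z) :
    S (t + s) f = S t (S s f) := by
  rw [hS.map_add s t hs ht, ContinuousLinearMap.comp_apply]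

theorem apply_zero (hS : IsC0Semigroup S) (f : Z) : S 0 f = f := by
  rw [hS.map_zero, ContinuousLinearMap.id_apply]

theorem continuousWithinAt_Ici_zero (hS : IsC0Semigroup S) (f : Z) :
    ContinuousWithinAt (fun t => S t f) (Ici 0) 0 := by
  rw [← continuousWithinAt_Ioi_iff_Ici, ContinuousWithinAt, hS.apply_zero]
  exact hS.tendsto_nhdsGT f

theorem continuousOn_orbit (hS : IsC0Semigroup S) {T C : ℝ} (hb : ∀ s ∈ Icc 0 T, ‖S s‖ ≤ C)
    (f : Z) : ContinuousOn (fun s => S s f) (Icc 0 T) := by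
  intro s₀ hs₀
  have hright : ContinuousWithinAt (fun s => S s f) (Ici s₀) s₀ := by
    have h := (S s₀).continuous.continuousAt.comp_continuousWithinAt <|
      (hS.continuousWithinAt_Ici_zero f).comp_of_eq (continuous_sub_right s₀).continuousWithinAt
        (fun s (hs : s₀ ≤ s) => sub_nonneg.2 hs) (sub_self s₀)
    refine h.congr (fun s hs => ?_) (by simp [hS.apply_zero])
    simp [← hS.apply_add (sub_nonneg.2 hs) hs₀.1]
  -- `S s f = S s₀ f + S s (f - S (s₀ - s) f)`, and the second term is small because `S` is
  -- bounded on `[0, T]`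
  have hleft : ContinuousWithinAt (fun s => S s f) (Icc 0 s₀) s₀ := by
    have hback : Tendsto (fun s => f - S (s₀ - s) f) (𝓝[Icc 0 s₀] s₀) (𝓝 0) := by
      have h := (hS.continuousWithinAt_Ici_zero f).comp_of_eq
        (continuous_sub_left s₀).continuousWithinAt
        (fun s (hs : s ∈ Icc 0 s₀) => sub_nonneg.2 hs.2) (sub_self s₀)
      simpa [hS.apply_zero] using (tendsto_const_nhds (x := f)).sub h
    have hbd : ∀ᶠ s in 𝓝[Icc 0 s₀] s₀, ‖S s‖ ≤ C :=
      eventually_nhdsWithin_of_forall fun s hs => hb s ⟨hs.1, hs.2.trans hs₀.2⟩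
    have h := (tendsto_clm_apply_zero hbd hback).const_add (S s₀ f)
    rw [add_zero] at h
    refine h.congr' (eventually_nhdsWithin_of_forall fun s hs => ?_)
    rw [map_sub, ← hS.apply_add (sub_nonneg.2 hs.2) hs.1, add_sub_cancel, add_sub_cancel]
  refine (hleft.union hright).mono fun s hs => ?_
  rcases le_total s s₀ with h | h
  exacts [Or.inl ⟨hs.1, h⟩, Or.inr h]

theorem hasDerivWithinAt_interpolate (hS : IsC0Semigroup S) (hR : IsC0Semigroup R) {t C : ℝ}
    (hb : ∀ s ∈ Icc 0 t, ‖S s‖ ≤ C) {f AS AR : Z} {u : ℝ} (hu : u ∈ Ico 0 t)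
    (hAS : HasGeneratorAt S AS (R u f)) (hAR : HasGeneratorAt R AR (R u f)) :
    HasDerivWithinAt (fun v => S (t - v) (R v f)) (S (t - u) (AR - AS)) (Ici u) u := by
  rw [← hasDerivWithinAt_Ioi_iff_Ici,
    hasDerivWithinAt_iff_tendsto_slope' (s := Ioi u) (lt_irrefl u)]
  have hIoo : Ioo u t ∈ 𝓝[>] u := Ioo_mem_nhdsGT hu.2
  have hshift : Tendsto (fun y => y - u) (𝓝[>] u) (𝓝[>] 0) := by
    refine tendsto_nhdsWithin_iff.2 ⟨?_, eventually_nhdsWithin_of_forall fun y (hy : u < y) => ?_⟩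
    · simpa using ((continuous_sub_right u).tendsto u).mono_left nhdsWithin_le_nhds
    · exact sub_pos.2 hy
  have hback : Tendsto (fun y => t - y) (𝓝[>] u) (𝓝[Icc 0 t] (t - u)) := by
    refine tendsto_nhdsWithin_iff.2 ⟨?_, mem_of_superset hIoo fun y hy => ?_⟩
    · exact ((continuous_sub_left t).tendsto u).mono_left nhdsWithin_le_nhds
    · exact ⟨by linarith [hy.2], by linarith [hu.1, hy.1]⟩
  have hquot := (hAR.comp hshift).sub (hAS.comp hshift)
  have horbit := ((hS.continuousOn_orbit hb (AR - AS)) (t - u)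
    ⟨by linarith [hu.2], by linarith [hu.1]⟩).tendsto.comp hback
  have hbd : ∀ᶠ y in 𝓝[>] u, ‖S (t - y)‖ ≤ C :=
    mem_of_superset hIoo fun y hy => hb _ ⟨by linarith [hy.2], by linarith [hu.1, hy.1]⟩
  refine (tendsto_clm_apply hbd hquot horbit).congr' (mem_of_superset hIoo fun y hy => ?_)
  have hRy : R y f = R (y - u) (R u f) := by
    rw [← hR.apply_add hu.1 (sub_nonneg.2 hy.1.le), sub_add_cancel]
  have hSw : S (t - u) (R u f) = S (t - y) (S (y - u) (R u f)) := by
    rw [← hS.apply_add (sub_nonneg.2 hy.1.le) (sub_nonneg.2 hy.2.le), sub_add_sub_cancel]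
  simp only [mem_ofPred_eq, Function.comp_apply, slope_def_module, hRy, hSw]
  rw [← map_sub, ← map_smul, ← smul_sub, sub_sub_sub_cancel_right]

/-- Duhamel estimate: `S t f - R t f` is the integral of `S (t - u) (A_S - A_R) (R u f)`. -/
theorem norm_apply_sub_apply_le (hS : IsC0Semigroup S) (hR : IsC0Semigroup R) {t C K : ℝ}
    (ht : 0 ≤ t) (hb : ∀ s ∈ Icc 0 t, ‖S s‖ ≤ C) {f : Z}
    (hRf : ContinuousOn (fun u => R u f) (Icc 0 t)) {AS AR : ℝ → Z}
    (hAS : ∀ u ∈ Ico 0 t, HasGeneratorAt S (AS u) (R u f))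
    (hAR : ∀ u ∈ Ico 0 t, HasGeneratorAt R (AR u) (R u f))
    (hK : ∀ u ∈ Ico 0 t, ‖AS u - AR u‖ ≤ K) :
    ‖S t f - R t f‖ ≤ C * K * t := by
  have hcont : ContinuousOn (fun v => S (t - v) (R v f)) (Icc 0 t) := by
    intro u hu
    have hback : Tendsto (fun v => t - v) (𝓝[Icc 0 t] u) (𝓝[Icc 0 t] (t - u)) :=
      tendsto_nhdsWithin_iff.2 ⟨((continuous_sub_left t).tendsto u).mono_left nhdsWithin_le_nhds,
        eventually_nhdsWithin_of_forall fun v hv => ⟨by linarith [hv.2], by linarith [hv.1]⟩⟩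
    exact tendsto_clm_apply
      (eventually_nhdsWithin_of_forall fun v hv => hb _ ⟨by linarith [hv.2], by linarith [hv.1]⟩)
      (hRf u hu)
      (((hS.continuousOn_orbit hb _) (t - u) ⟨by linarith [hu.2], by linarith [hu.1]⟩).tendsto.comp
        hback)
  have hbound : ∀ u ∈ Ico 0 t, ‖S (t - u) (AR u - AS u)‖ ≤ C * K := fun u hu =>
    (S (t - u)).le_of_opNorm_le_of_le (hb _ ⟨by linarith [hu.2], by linarith [hu.1]⟩)
      (by rw [norm_sub_rev]; exact hK u hu)
  have h := norm_image_sub_le_of_norm_deriv_right_le_segment hcont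
    (fun u hu => hasDerivWithinAt_interpolate hS hR hb hu (hAS u hu) (hAR u hu)) hbound t
    ⟨ht, le_rfl⟩
  simpa [hS.apply_zero, hR.apply_zero, norm_sub_rev] using h

end IsC0Semigroup

section Approximation

variable {P : ℕ → ℝ → Z →L[ℝ] Z} {M ω : ℝ}

theorem uniformCauchySeqOn_of_generator_sub_le (hP : ∀ n, IsC0Semigroup (P n))
    (hgb : ∀ n t, 0 ≤ t → ‖P n t‖ ≤ M * Real.exp (ω * t)) {f : Z} {A : ℕ → Z → Z}
    (hA : ∀ n m u, 0 ≤ u → HasGeneratorAt (P n) (A n (P m u f)) (P m u f))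
    {T : ℝ} {b : ℕ × ℕ → ℝ} (hb : Tendsto b atTop (𝓝 0))
    (hAb : ∀ n m u, 0 ≤ u → u ≤ T → ‖A n (P m u f) - A m (P m u f)‖ ≤ b (n, m)) :
    UniformCauchySeqOn (fun n t => P n t f) atTop (Icc 0 T) := by
  set C := M * Real.exp (|ω| * T)
  have hC : ∀ n, ∀ s ∈ Icc 0 T, ‖P n s‖ ≤ C := fun n => norm_le_of_growthBound (hgb n)
  refine uniformCauchySeqOn_of_dist_le (b := fun p => C * |b p| * T) ?_ fun n m t ht => ?_
  · simpa using (hb.abs.const_mul C).mul_const T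
  have hsub : Icc 0 t ⊆ Icc 0 T := Icc_subset_Icc_right ht.2
  rw [dist_eq_norm]
  calc ‖P n t f - P m t f‖ ≤ C * |b (n, m)| * t :=
        (hP n).norm_apply_sub_apply_le (hP m) ht.1 (fun s hs => hC n s (hsub hs))
          ((hP m).continuousOn_orbit (fun s hs => hC m s (hsub hs)) f)
          (fun u hu => hA n m u hu.1) (fun u hu => hA m m u hu.1)
          fun u hu => (hAb n m u hu.1 (hu.2.le.trans ht.2)).trans (le_abs_self _)
    _ ≤ C * |b (n, m)| * T :=
        mul_le_mul_of_nonneg_left ht.2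
          (mul_nonneg ((norm_nonneg _).trans (hC n t ht)) (abs_nonneg _))

theorem IsC0Semigroup.of_tendstoUniformlyOn (hP : ∀ n, IsC0Semigroup (P n))
    (hgb : ∀ n t, 0 ≤ t → ‖P n t‖ ≤ M * Real.exp (ω * t)) {Q : ℝ → Z →L[ℝ] Z}
    (hQ : ∀ T f, TendstoUniformlyOn (fun n t => P n t f) (fun t => Q t f) atTop (Icc 0 T)) :
    IsC0Semigroup Q := by
  have hlim : ∀ t, 0 ≤ t → ∀ f, Tendsto (fun n => P n t f) atTop (𝓝 (Q t f)) :=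
    fun t ht f => (hQ t f).tendsto_at ⟨ht, le_rfl⟩
  have hzero : Q 0 = ContinuousLinearMap.id ℝ Z := by
    ext f
    refine tendsto_nhds_unique (hlim 0 le_rfl f) ?_
    simp only [(hP _).apply_zero, ContinuousLinearMap.id_apply, tendsto_const_nhds]
  refine ⟨hzero, fun s t hs ht => ?_, fun f => ?_⟩
  · ext f
    refine tendsto_nhds_unique (hlim _ (add_nonneg ht hs) f) ?_
    simp only [(hP _).apply_add hs ht, ContinuousLinearMap.comp_apply]
    exact tendsto_clm_apply (Eventually.of_forall fun n => norm_le_of_growthBound (hgb n) t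
      ⟨ht, le_rfl⟩) (hlim s hs f) (hlim t ht _)
  · have hcont : ContinuousOn (fun t => Q t f) (Icc 0 1) :=
      (hQ 1 f).continuousOn (Frequently.of_forall fun n =>
        (hP n).continuousOn_orbit (norm_le_of_growthBound (hgb n)) f)
    have h := (hcont 0 ⟨le_rfl, zero_le_one⟩).mono_of_mem_nhdsWithin (Icc_mem_nhdsGT one_pos)
    rwa [ContinuousWithinAt, hzero, ContinuousLinearMap.id_apply] at h

end Approximation

end Semigroup

namespace GenFeller

theorem abs_le_rnorm_mul {X : Type*} {ρ f : X → ℝ} (hρ : ∀ x, 0 < ρ x)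
    (hf : MemB ρ f) (x : X) : |f x| ≤ rnorm ρ f * ρ x := by
  obtain ⟨C, hC⟩ := hf
  have hbdd : BddAbove (range fun y => (ρ y)⁻¹ * |f y|) := by
    refine ⟨C, ?_⟩
    rintro _ ⟨y, rfl⟩
    rw [inv_mul_le_iff₀ (hρ y), mul_comm]
    exact hC y
  have h := le_csSup hbdd ⟨x, rfl⟩
  rwa [inv_mul_le_iff₀ (hρ x), mul_comm] at h

theorem continuous_apply_of_rnorm_eq {X Z : Type*} [NormedAddCommGroup Z] [NormedSpace ℝ Z]
    {ρ : X → ℝ} (hρ : ∀ x, 0 < ρ x) (ι : Z →ₗ[ℝ] X → ℝ) (hmem : ∀ f, MemB ρ (ι f))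
    (hnorm : ∀ f, rnorm ρ (ι f) = ‖f‖) (x : X) : Continuous fun f => ι f x :=
  AddMonoidHomClass.continuous_of_bound (LinearMap.proj x ∘ₗ ι) (ρ x) fun f => by
    simpa [hnorm, mul_comm] using abs_le_rnorm_mul hρ (hmem f) x

end GenFeller

theorem approximation_semigroups_generalized_general
    {Z : Type v} [NormedAddCommGroup Z] [NormedSpace ℝ Z] [CompleteSpace Z]
    (P : ℕ → ℝ → Z →L[ℝ] Z)
    (hid : ∀ n, P n 0 = ContinuousLinearMap.id ℝ Z)
    (hlaw : ∀ n s t, 0 ≤ s → 0 ≤ t → P n (t + s) = (P n t).comp (P n s))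
    (hcont : ∀ n (f : Z), Tendsto (fun t => P n t f) (nhdsWithin 0 (Set.Ioi 0)) (nhds f))
    (M ω : ℝ)
    (hgb : ∀ n t, 0 ≤ t → ‖P n t‖ ≤ M * Real.exp (ω * t))
    (D : Set Z) (hDdense : Dense ((Submodule.span ℝ D : Submodule ℝ Z) : Set Z))
    (A : ℕ → Z → Z)
    (hgen' : ∀ n m u, 0 ≤ u → ∀ f ∈ D,
      Tendsto (fun t : ℝ => t⁻¹ • (P n t (P m u f) - P m u f))
        (nhdsWithin 0 (Set.Ioi 0)) (nhds (A n (P m u f))))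
    (nD : Z → ℝ)
    (ha : ∀ f ∈ D, ∀ t : ℝ, 0 < t → ∃ a : ℕ → ℕ → ℝ,
      Tendsto (fun p : ℕ × ℕ => a p.1 p.2) atTop (nhds 0) ∧
      ∀ n m u, 0 ≤ u → u ≤ t →
        ‖A n (P m u f) - A m (P m u f)‖ ≤ a n m * nD f) :
    ∃ Pinf : ℝ → Z →L[ℝ] Z,
      Pinf 0 = ContinuousLinearMap.id ℝ Z ∧
      (∀ s t, 0 ≤ s → 0 ≤ t → Pinf (t + s) = (Pinf t).comp (Pinf s)) ∧
      (∀ f : Z, Tendsto (fun t => Pinf t f) (nhdsWithin 0 (Set.Ioi 0)) (nhds f)) ∧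
      (∀ t, 0 ≤ t → ‖Pinf t‖ ≤ M * Real.exp (ω * t)) ∧
      (∀ f : Z, ∀ T : ℝ, 0 < T → ∀ ε : ℝ, 0 < ε → ∃ N : ℕ, ∀ n ≥ N,
        ∀ t ∈ Set.Icc (0:ℝ) T, ‖P n t f - Pinf t f‖ ≤ ε) ∧
      (∀ (X : Type u) (_ : TopologicalSpace X) (ρ : X → ℝ) (ι : Z → X → ℝ),
        GenFeller.Admissible ρ →
        (∀ f g : Z, ι (f + g) = ι f + ι g) →
        (∀ (c : ℝ) (f : Z), ι (c • f) = c • ι f) →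
        (∀ f : Z, GenFeller.MemCb ρ (ι f)) →
        (∀ f : Z, GenFeller.rnorm ρ (ι f) = ‖f‖) →
        (∀ g : X → ℝ, GenFeller.MemCb ρ g → ∃ f : Z, ι f = g) →
        (∀ n t, 0 ≤ t → ∀ f : Z, (∀ x, 0 ≤ ι f x) → ∀ x, 0 ≤ ι (P n t f) x) →
        ∀ t, 0 ≤ t → ∀ f : Z, (∀ x, 0 ≤ ι f x) → ∀ x, 0 ≤ ι (Pinf t f) x) := by
  have hP : ∀ n, IsC0Semigroup (P n) := fun n => ⟨hid n, hlaw n, hcont n⟩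
  have hcauchy : ∀ T f, UniformCauchySeqOn (fun n t => P n t f) atTop (Icc 0 T) := by
    refine fun T => uniformCauchySeqOn_of_dense_span (fun n => norm_le_of_growthBound (hgb n))
      hDdense fun g hg => ?_
    obtain ⟨a, ha0, hag⟩ := ha g hg (max T 1) (by positivity)
    exact uniformCauchySeqOn_of_generator_sub_le hP hgb (fun n m u hu => hgen' n m u hu g hg)
      (by simpa using ha0.mul_const (nD g))
      fun n m u hu huT => hag n m u hu (huT.trans (le_max_left T 1))
  obtain ⟨Pinf, hunif⟩ := exists_tendstoUniformlyOn_Icc hcauchy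
  have hlim : ∀ t, 0 ≤ t → ∀ f, Tendsto (fun n => P n t f) atTop (𝓝 (Pinf t f)) :=
    fun t ht f => (hunif t f).tendsto_at ⟨ht, le_rfl⟩
  obtain ⟨hzero, hlaw', hcont'⟩ := IsC0Semigroup.of_tendstoUniformlyOn hP hgb hunif
  refine ⟨Pinf, hzero, hlaw', hcont', fun t ht => ?_, fun f T _ ε hε => ?_, ?_⟩
  · exact opNorm_le_of_tendsto ((norm_nonneg _).trans (hgb 0 t ht)) (fun n => hgb n t ht)
      (hlim t ht)
  · obtain ⟨N, hN⟩ := eventually_atTop.1 (Metric.tendstoUniformlyOn_iff.1 (hunif T f) ε hε)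
    exact ⟨N, fun n hn t ht => by rw [← dist_eq_norm, dist_comm]; exact (hN n hn t ht).le⟩
  · intro X _ ρ ι hρ hadd hsmul hmem hnorm _ hpos t ht f hf x
    have hx := GenFeller.continuous_apply_of_rnorm_eq hρ.1 ⟨⟨ι, hadd⟩, hsmul⟩
      (fun g => (hmem g).1) hnorm x
    exact ge_of_tendsto ((hx.tendsto _).comp (hlim t ht f))
      (Eventually.of_forall fun n => hpos n t ht f hf x)

/-- Theorem 3.2 (generalized approximation theorem): given strongly continuous
semigroups `(P^n_t)` on a Banach space `Z` with uniform growth bound `M exp(ω t)`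
and a subset `D ⊆ ∩_n dom(A^n)` with dense linear span, equipped with a norm `nD` on
its span, such that `P^m_u f ∈ ∩_n dom(A^n)` and
`‖A^n P^m_u f − A^m P^m_u f‖ ≤ a^f_{nm} ‖f‖_D` uniformly for `0 ≤ u ≤ t`, with
`a^f_{nm} → 0`, there exists a strongly continuous limiting semigroup `(P^∞_t)` on
`Z` with the same growth bound such that `P^n_t f → P^∞_t f` uniformly on compact
time intervals.  If moreover `Z = 𝓑^ρ(X)` for a weighted space `(X, ρ)` and each
`P^n` is positive (hence a generalized Feller semigroup), then so is the limit. -/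
theorem approximation_semigroups_generalized
    {Z : Type v} [NormedAddCommGroup Z] [NormedSpace ℝ Z] [CompleteSpace Z]
    (P : ℕ → ℝ → Z →L[ℝ] Z)
    (hid : ∀ n, P n 0 = ContinuousLinearMap.id ℝ Z)
    (hlaw : ∀ n s t, 0 ≤ s → 0 ≤ t → P n (t + s) = (P n t).comp (P n s))
    (hcont : ∀ n (f : Z), Tendsto (fun t => P n t f) (nhdsWithin 0 (Set.Ioi 0)) (nhds f))
    (M ω : ℝ) (hM : 1 ≤ M)
    (hgb : ∀ n t, 0 ≤ t → ‖P n t‖ ≤ M * Real.exp (ω * t))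
    (D : Set Z) (hDdense : Dense ((Submodule.span ℝ D : Submodule ℝ Z) : Set Z))
    (A : ℕ → Z → Z)
    (hgen : ∀ n, ∀ f ∈ D, Tendsto (fun t : ℝ => t⁻¹ • (P n t f - f))
      (nhdsWithin 0 (Set.Ioi 0)) (nhds (A n f)))
    (hgen' : ∀ n m u, 0 ≤ u → ∀ f ∈ D,
      Tendsto (fun t : ℝ => t⁻¹ • (P n t (P m u f) - P m u f))
        (nhdsWithin 0 (Set.Ioi 0)) (nhds (A n (P m u f))))
    (nD : Z → ℝ)
    (hnD0 : ∀ f ∈ Submodule.span ℝ D, 0 ≤ nD f)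
    (hnDdef : ∀ f ∈ Submodule.span ℝ D, nD f = 0 → f = 0)
    (hnDsmul : ∀ (c : ℝ), ∀ f ∈ Submodule.span ℝ D, nD (c • f) = |c| * nD f)
    (hnDtri : ∀ f ∈ Submodule.span ℝ D, ∀ g ∈ Submodule.span ℝ D,
      nD (f + g) ≤ nD f + nD g)
    (ha : ∀ f ∈ D, ∀ t : ℝ, 0 < t → ∃ a : ℕ → ℕ → ℝ,
      Tendsto (fun p : ℕ × ℕ => a p.1 p.2) atTop (nhds 0) ∧
      ∀ n m u, 0 ≤ u → u ≤ t →
        ‖A n (P m u f) - A m (P m u f)‖ ≤ a n m * nD f) :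
    ∃ Pinf : ℝ → Z →L[ℝ] Z,
      Pinf 0 = ContinuousLinearMap.id ℝ Z ∧
      (∀ s t, 0 ≤ s → 0 ≤ t → Pinf (t + s) = (Pinf t).comp (Pinf s)) ∧
      (∀ f : Z, Tendsto (fun t => Pinf t f) (nhdsWithin 0 (Set.Ioi 0)) (nhds f)) ∧
      (∀ t, 0 ≤ t → ‖Pinf t‖ ≤ M * Real.exp (ω * t)) ∧
      (∀ f : Z, ∀ T : ℝ, 0 < T → ∀ ε : ℝ, 0 < ε → ∃ N : ℕ, ∀ n ≥ N,
        ∀ t ∈ Set.Icc (0:ℝ) T, ‖P n t f - Pinf t f‖ ≤ ε) ∧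
      (∀ (X : Type u) (_ : TopologicalSpace X) (ρ : X → ℝ) (ι : Z → X → ℝ),
        GenFeller.Admissible ρ →
        (∀ f g : Z, ι (f + g) = ι f + ι g) →
        (∀ (c : ℝ) (f : Z), ι (c • f) = c • ι f) →
        (∀ f : Z, GenFeller.MemCb ρ (ι f)) →
        (∀ f : Z, GenFeller.rnorm ρ (ι f) = ‖f‖) →
        (∀ g : X → ℝ, GenFeller.MemCb ρ g → ∃ f : Z, ι f = g) →
        (∀ n t, 0 ≤ t → ∀ f : Z, (∀ x, 0 ≤ ι f x) → ∀ x, 0 ≤ ι (P n t f) x) →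
        ∀ t, 0 ≤ t → ∀ f : Z, (∀ x, 0 ≤ ι f x) → ∀ x, 0 ≤ ι (Pinf t f) x) :=
  approximation_semigroups_generalized_general P hid hlaw hcont M ω hgb D hDdense A hgen' nD ha
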